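/- Let N ≥ 2 and let l ≥ 2 be an integer with l² ∣ N. Then the constant 2l-tuple (N/l mod N, …, N/l mod N), which is a solution of (E_N), is an irreducible solution of (E_N) if and only if l = 2. -/

import Mathlib

/-!
With `a = N / l` one has `a * a = 0` and `l * a = 0` in `ℤ/Nℤ`, and then
`M(a)^(2j) = (-1)^j [[1, j a], [-j a, 1]]`; for `j = l` this is `±Id`.
For `l ≥ 3` the tuple splits as `(-a, a, a, -a) ⊕ (2a, a, …, a, 2a)` with `2l - 4` middle
entries, and the second summand is a solution by the same formula because `(l - 2) a = -2a`.
For `l = 2` both summands would be triples, but the middle entry `y` of a solution `(x, y, z)`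
satisfies `y x = 1`, whereas the nilpotent `a` is not a unit.
-/

open Matrix

/-- `Mmat [a₁, …, aₙ]` is the product `[[aₙ,-1],[1,0]] ⋯ [[a₁,-1],[1,0]]`. -/
def Mmat {R : Type*} [CommRing R] : List R → Matrix (Fin 2) (Fin 2) R
  | [] => 1
  | a :: t => Mmat t * !![a, -1; 1, 0]

/-- A tuple is a solution of (E_N) if its matrix is `Id` or `-Id`. -/
def IsSolution {R : Type*} [CommRing R] (l : List R) : Prop :=
  Mmat l = 1 ∨ Mmat l = -1

/-- The sum `(a₁,…,aₙ) ⊕ (b₁,…,bₘ) = (a₁+bₘ, a₂,…,aₙ₋₁, aₙ+b₁, b₂,…,bₘ₋₁)`. -/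
def oplus {R : Type*} [CommRing R] (a b : List R) : List R :=
  List.ofFn (fun i : Fin (a.length + b.length - 2) =>
    if (i : ℕ) = 0 then a.getD 0 0 + b.getD (b.length - 1) 0
    else if (i : ℕ) < a.length - 1 then a.getD (i : ℕ) 0
    else if (i : ℕ) = a.length - 1 then a.getD (a.length - 1) 0 + b.getD 0 0
    else b.getD ((i : ℕ) - a.length + 1) 0)

/-- Two tuples are equivalent if one is a cyclic permutation of the other or of
its reversal. -/
def TupleEquiv {R : Type*} (a b : List R) : Prop :=
  (∃ k, b = a.rotate k) ∨ (∃ k, b = a.reverse.rotate k)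

/-- A solution `c` (of size ≥ 3) is reducible if `c ∼ a ⊕ b` with `b` a solution,
`a` of size ≥ 3 and `b` of size ≥ 3. -/
def Reducible {R : Type*} [CommRing R] (c : List R) : Prop :=
  ∃ a b : List R, 3 ≤ a.length ∧ 3 ≤ b.length ∧ IsSolution b ∧
    TupleEquiv c (oplus a b)

/-- The alternating tuple `(k, -k, k, -k, …)` of length `n`. -/
def altList {R : Type*} [CommRing R] (n : ℕ) (k : R) : List R :=
  List.ofFn (fun i : Fin n => if (i : ℕ) % 2 = 0 then k else -k)

/-- Continuants: `K₋₁ = 0`, `K₀ = 1`,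
`Kₙ(x₁,…,xₙ) = x₁·Kₙ₋₁(x₂,…,xₙ) - Kₙ₋₂(x₃,…,xₙ)`. -/
def contK {R : Type*} [CommRing R] : List R → R
  | [] => 1
  | [x] => x
  | x :: y :: t => x * contK (y :: t) - contK t

lemma tupleEquiv_replicate_iff {α : Type*} {n : ℕ} {a : α} {c : List α} :
    TupleEquiv (List.replicate n a) c ↔ c = List.replicate n a := by
  simp [TupleEquiv, List.rotate_replicate]

section
variable {R : Type*} [CommRing R]

lemma Mmat_cons (a : R) (t : List R) : Mmat (a :: t) = Mmat t * !![a, -1; 1, 0] := rfl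

lemma Mmat_append (s t : List R) : Mmat (s ++ t) = Mmat t * Mmat s := by
  induction s with
  | nil => exact (mul_one _).symm
  | cons a s ih => rw [List.cons_append, Mmat_cons, Mmat_cons, ih, mul_assoc]

lemma Mmat_replicate (a : R) (n : ℕ) : Mmat (List.replicate n a) = !![a, -1; 1, 0] ^ n := by
  induction n with
  | zero => rfl
  | succ n ih => rw [List.replicate_succ, Mmat_cons, ih, pow_succ]

lemma Mmat_replicate_two_mul_of_mul_self_eq_zero {a : R} (ha : a * a = 0) (j : ℕ) :
    Mmat (List.replicate (2 * j) a) = (-1 : R) ^ j • !![1, j * a; -(j * a), 1] := by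
  rw [Mmat_replicate]
  induction j with
  | zero => simp [one_fin_two]
  | succ j ih =>
    rw [mul_add, mul_one, pow_add, ih, sq, smul_mul_assoc, pow_succ, mul_smul]
    congr 1
    ext i k
    fin_cases i <;> fin_cases k <;> simp [mul_apply, Fin.sum_univ_succ, mul_assoc, ha] <;> ring

lemma isSolution_of_eq_neg_one_pow_smul_one {t : List R} (j : ℕ)
    (h : Mmat t = (-1 : R) ^ j • 1) : IsSolution t := by
  rcases neg_one_pow_eq_or R j with hj | hj <;> simp [IsSolution, h, hj]

theorem isSolution_replicate_two_mul {a : R} (ha : a * a = 0) {l : ℕ} (hla : (l : R) * a = 0) :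
    IsSolution (List.replicate (2 * l) a) :=
  isSolution_of_eq_neg_one_pow_smul_one l <| by
    rw [Mmat_replicate_two_mul_of_mul_self_eq_zero ha, hla, neg_zero, ← one_fin_two]

lemma mul_eq_one_of_isSolution_triple {x y z : R} (h : IsSolution [x, y, z]) : y * x = 1 := by
  have hentry : Mmat [x, y, z] 1 0 = y * x - 1 := by
    simp [Mmat, mul_apply, Fin.sum_univ_succ, sub_eq_add_neg]
  have hzero : Mmat [x, y, z] 1 0 = 0 := by rcases h with h | h <;> simp [h]
  linear_combination hzero - hentry

lemma length_oplus (a b : List R) : (oplus a b).length = a.length + b.length - 2 := by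
  simp [oplus]

lemma oplus_cons_append (p q r w : R) (s t : List R) :
    oplus (p :: (s ++ [q])) (r :: (t ++ [w])) = (p + w) :: (s ++ (q + r) :: t) := by
  apply List.ext_getElem
  · simp only [length_oplus, List.length_cons, List.length_append, List.length_nil]; omega
  · intro i _ h₂
    simp only [oplus, List.getElem_ofFn]
    rcases i with _ | i
    · simp
    · rcases lt_trichotomy i s.length with hi | rfl | hi
      · simp [hi, List.getElem?_append_left]
      · simp
      · obtain ⟨k, rfl⟩ := Nat.exists_eq_add_of_lt hi
        have hk : k < t.length := by simp only [List.length_cons, List.length_append] at h₂; omega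
        simp (disch := omega) [List.getElem?_append_left hk, List.getElem_append_right,
          show s.length + k + 1 - s.length = k + 1 by omega, hi.ne', hi.not_gt]

theorem reducible_replicate_two_mul {a : R} (ha : a * a = 0) {l : ℕ} (hla : (l : R) * a = 0)
    (hl : 3 ≤ l) : Reducible (List.replicate (2 * l) a) := by
  obtain ⟨j, rfl⟩ : ∃ j, l = j + 2 := ⟨l - 2, by omega⟩
  have hja : (j : R) * a = -(2 * a) := by push_cast at hla; linear_combination hla
  refine ⟨-a :: ([a, a] ++ [-a]), 2 * a :: (List.replicate (2 * j) a ++ [2 * a]),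
    by simp, by simp only [List.length_cons, List.length_append, List.length_replicate]; omega,
    ?_, ?_⟩
  · apply isSolution_of_eq_neg_one_pow_smul_one (j + 1)
    rw [Mmat_cons, Mmat_append, Mmat_replicate_two_mul_of_mul_self_eq_zero ha, hja,
      mul_smul_comm, smul_mul_assoc, pow_succ, mul_smul]
    congr 1
    have h2a : 2 * a * (2 * a) = 0 := by linear_combination 4 * ha
    ext i k
    fin_cases i <;> fin_cases k <;> simp [Mmat, mul_apply, Fin.sum_univ_succ, h2a]
  · rw [tupleEquiv_replicate_iff, oplus_cons_append, show -a + 2 * a = a by ring,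
      show 2 * (j + 2) = 2 * j + 1 + 1 + 1 + 1 by ring]
    simp [List.replicate_succ]

theorem not_reducible_replicate_four {a : R} (ha : ¬IsUnit a) :
    ¬Reducible (List.replicate 4 a) := by
  rintro ⟨x, b, hx, hb, hsol, hequiv⟩
  have hsum := tupleEquiv_replicate_iff.1 hequiv
  have hlen := congrArg List.length hsum
  rw [length_oplus, List.length_replicate] at hlen
  obtain ⟨x₀, x₁, x₂, rfl⟩ := List.length_eq_three.1 (by omega : x.length = 3)
  obtain ⟨b₀, b₁, b₂, rfl⟩ := List.length_eq_three.1 (by omega : b.length = 3)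
  have hb₁ : b₁ ∈ oplus [x₀, x₁, x₂] [b₀, b₁, b₂] := by
    show b₁ ∈ [x₀ + b₂, x₁, x₂ + b₀, b₁]
    simp
  rw [hsum] at hb₁
  rw [List.eq_of_mem_replicate hb₁] at hsol
  exact ha (.of_mul_eq_one _ (mul_eq_one_of_isSolution_triple hsol))

end

theorem replicate_div_sq_irreducible_iff (N l : ℕ) (hN : 2 ≤ N) (hl : 2 ≤ l)
    (hdvd : l ^ 2 ∣ N) :
    IsSolution (List.replicate (2 * l) ((N / l : ℕ) : ZMod N)) ∧
    (¬ Reducible (List.replicate (2 * l) ((N / l : ℕ) : ZMod N)) ↔ l = 2) := by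
  obtain ⟨k, rfl⟩ := hdvd
  have hdiv : l ^ 2 * k / l = l * k := by
    rw [sq, mul_assoc]; exact Nat.mul_div_cancel_left _ (by omega)
  rw [hdiv]
  have ha : ((l * k : ℕ) : ZMod (l ^ 2 * k)) * (l * k : ℕ) = 0 := by
    rw [← Nat.cast_mul, show l * k * (l * k) = l ^ 2 * k * k by ring, Nat.cast_mul,
      ZMod.natCast_self, zero_mul]
  have hla : (l : ZMod (l ^ 2 * k)) * (l * k : ℕ) = 0 := by
    rw [← Nat.cast_mul, ← mul_assoc, ← sq, ZMod.natCast_self]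
  refine ⟨isSolution_replicate_two_mul ha hla, fun hirr => ?_, ?_⟩
  · by_contra hl2
    exact hirr (reducible_replicate_two_mul ha hla (by omega))
  · rintro rfl
    have : Fact (1 < 2 ^ 2 * k) := ⟨by omega⟩
    exact not_reducible_replicate_four (IsNilpotent.not_isUnit ⟨2, (sq _).trans ha⟩)
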